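/- arXiv:2005.04066 — 2 statements merged into one kernel-verified Lean document; each statement's English description precedes it below -/
import Mathlib

section
/- Let b_0 < b_1 < b_2 < ⋯ enumerate in increasing order the positive integers whose odd part is congruent to 3 modulo 4. Then b_n - s_{b_n} = 2n + 1 for all n ≥ 0, where s_m = 1 + Σ_{k=0}^{m} j_k with j_0 = 0 and j_k = (-1/k) for k ≥ 1. -/
/-- The odd part of `n`: `n` divided by the largest power of `2` dividing `n`. -/
def oddPart (n : ℕ) : ℕ := n / 2 ^ (n.factorization 2)

/-- The Jacobi sequence: `j 0 = 0` and `j n = (-1/n)` (Jacobi symbol) for `n ≥ 1`. -/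
def jac (n : ℕ) : ℤ := if n = 0 then 0 else jacobiSym (-1) n

/-- `s n = 1 + Σ_{k=0}^n j k`. -/
def s (n : ℕ) : ℤ := 1 + ∑ k ∈ Finset.range (n + 1), jac k

/-!
Since `(-1/2) = 1`, the symbol `(-1/k)` only sees the odd part of `k`, so `j_k = -1` exactly
when `k` is one of the `b`'s and `j_k = 1` for the other `k ≥ 1`. Hence
`s_m = 1 + m - 2 · #{b_i ≤ m}`, and `#{b_i ≤ b_n} = n + 1`.
-/

open Finset

lemma Nat.count_succ_apply_of_strictMono {p : ℕ → Prop} [DecidablePred p] {b : ℕ → ℕ}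
    (hb : StrictMono b) (hp : ∀ m, p m ↔ ∃ n, b n = m) (n : ℕ) :
    Nat.count p (b n + 1) = n + 1 := by
  have himage : {k ∈ range (b n + 1) | p k} = (range (n + 1)).image b := by
    ext m
    simp only [mem_filter, mem_range, mem_image, Nat.lt_succ_iff, hp]
    constructor
    · rintro ⟨hle, i, rfl⟩
      exact ⟨i, hb.le_iff_le.mp hle, rfl⟩
    · rintro ⟨i, hi, rfl⟩
      exact ⟨hb.le_iff_le.mpr hi, i, rfl⟩
  rw [Nat.count_eq_card_filter_range, himage, Finset.card_image_of_injective _ hb.injective,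
    card_range]

lemma oddPart_odd {n : ℕ} (hn : n ≠ 0) : Odd (oddPart n) :=
  Nat.odd_iff.mpr (Nat.two_dvd_ne_zero.mp (Nat.not_dvd_ordCompl Nat.prime_two hn))

lemma jacobiSym_neg_one_oddPart {k : ℕ} (hk : k ≠ 0) :
    jacobiSym (-1) (oddPart k) = jacobiSym (-1) k := by
  have hpow : 2 ^ k.factorization 2 ≠ 0 := by positivity
  have hodd : oddPart k ≠ 0 := (oddPart_odd hk).pos.ne'
  have htwo : jacobiSym (-1) 2 = 1 := by norm_num
  have hsplit : k = 2 ^ k.factorization 2 * oddPart k := (Nat.ordProj_mul_ordCompl_eq_self k 2).symm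
  conv_rhs => rw [hsplit]
  rw [jacobiSym.mul_right' _ hpow hodd, jacobiSym.pow_right, htwo, one_pow, one_mul]

lemma jacobiSym_neg_one_of_odd {m : ℕ} (hm : Odd m) :
    jacobiSym (-1) m = if m % 4 = 3 then -1 else 1 := by
  rw [jacobiSym.at_neg_one hm]
  rcases Nat.odd_mod_four_iff.mp (Nat.odd_iff.mp hm) with h | h
  · simp [ZMod.χ₄_nat_one_mod_four h, h]
  · simp [ZMod.χ₄_nat_three_mod_four h, h]

lemma jac_of_ne_zero {k : ℕ} (hk : k ≠ 0) : jac k = if oddPart k % 4 = 3 then -1 else 1 := by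
  rw [jac, if_neg hk, ← jacobiSym_neg_one_oddPart hk, jacobiSym_neg_one_of_odd (oddPart_odd hk)]

lemma sum_range_succ_jac (m : ℕ) :
    ∑ k ∈ range (m + 1), jac k =
      m - 2 * Nat.count (fun k => 0 < k ∧ oddPart k % 4 = 3) (m + 1) := by
  induction m with
  | zero => simp [jac, Nat.count_succ]
  | succ m ih =>
    rw [sum_range_succ, ih, Nat.count_succ _ (m + 1), jac_of_ne_zero m.succ_ne_zero]
    by_cases h : oddPart (m + 1) % 4 = 3 <;> simp [h] <;> ring

theorem b_sub_s_b (b : ℕ → ℕ) (hb : StrictMono b)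
    (hrange : ∀ m : ℕ, (0 < m ∧ oddPart m % 4 = 3) ↔ ∃ n, b n = m) :
    ∀ n : ℕ, (b n : ℤ) - s (b n) = 2 * n + 1 := by
  intro n
  rw [s, sum_range_succ_jac, Nat.count_succ_apply_of_strictMono hb hrange]
  push_cast
  ring
end

section
/- For n ≥ 1, the digit m ≥ 2 occurs at position n in the sequence s (i.e., s_n = m) if and only if the binary representation of n has exactly m - 1 runs. -/
/-!
Both `n ↦ s n - 1` and `binRuns` obey the binary recursion `f (2m + b) = f m + (m + b) % 2`
for `m ≥ 1`, `b < 2`, and agree at `n = 0, 1`. For `s` this comes from `j (2m) = j m` and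
`j (2m + 1) = (-1)^m`; for `binRuns`, appending the bit `b` to `m` opens a new run exactly when
`b` differs from the last bit of `m`, i.e. when `m + b` is odd.
-/

open Classical

/-- The number of runs (maximal blocks of equal digits) in the binary
representation of `n`, with `runs 0 = 0`. -/
noncomputable def binRuns (n : ℕ) : ℕ :=
  if n = 0 then 0
  else 1 + ((Finset.range (Nat.log2 n)).filter
    (fun i => n.testBit i ≠ n.testBit (i + 1))).card

open Finset

lemma jac_two_mul (m : ℕ) : jac (2 * m) = jac m := by
  rcases eq_or_ne m 0 with rfl | hm
  · rfl
  have : NeZero m := ⟨hm⟩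
  have h2 : jacobiSym (-1) 2 = 1 := by
    rw [← jacobiSym.legendreSym.to_jacobiSym]; decide
  rw [jac, jac, if_neg (by omega), if_neg hm, jacobiSym.mul_right, h2, one_mul]

lemma jac_two_mul_add_one (m : ℕ) : jac (2 * m + 1) = (-1) ^ m := by
  rw [jac, if_neg (by omega), jacobiSym.at_neg_one ⟨m, by ring⟩,
    ZMod.χ₄_eq_neg_one_pow (by omega)]
  congr 1
  omega

lemma s_succ (n : ℕ) : s (n + 1) = s n + jac (n + 1) := by
  rw [s, s, sum_range_succ _ (n + 1), add_assoc]

lemma mod_two_add_neg_one_pow (m : ℕ) : ((m % 2 : ℕ) : ℤ) + (-1) ^ m = ((m + 1) % 2 : ℕ) := by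
  rcases Nat.even_or_odd m with h | h
  · have hm : m % 2 = 0 := Nat.even_iff.mp h
    rw [h.neg_one_pow, hm, show (m + 1) % 2 = 1 by omega]; rfl
  · have hm : m % 2 = 1 := Nat.odd_iff.mp h
    rw [h.neg_one_pow, hm, show (m + 1) % 2 = 0 by omega]; rfl

lemma s_two_mul (m : ℕ) : s (2 * m) = s m + ((m % 2 : ℕ) : ℤ) := by
  induction m with
  | zero => simp
  | succ m ih =>
    rw [show 2 * (m + 1) = 2 * m + 1 + 1 by ring, s_succ, s_succ, ih,
      show 2 * m + 1 + 1 = 2 * (m + 1) by ring, jac_two_mul, jac_two_mul_add_one, s_succ,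
      ← mod_two_add_neg_one_pow]
    ring

lemma s_two_mul_add (m b : ℕ) (hb : b < 2) : s (2 * m + b) = s m + (((m + b) % 2 : ℕ) : ℤ) := by
  interval_cases b
  · exact s_two_mul m
  · rw [s_succ, s_two_mul, jac_two_mul_add_one, add_assoc, mod_two_add_neg_one_pow]

lemma binRuns_two_mul_add (m b : ℕ) (hm : m ≠ 0) (hb : b < 2) :
    binRuns (2 * m + b) = binRuns m + (m + b) % 2 := by
  have hlog : (2 * m + b).log2 = m.log2 + 1 := by
    rw [Nat.log2_def, if_pos (by omega)]
    congr 2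
    omega
  have hshift (i : ℕ) : (2 * m + b).testBit (i + 1) = m.testBit i := by
    rw [Nat.testBit_succ]
    congr 1
    omega
  rw [binRuns, binRuns, if_neg (by omega), if_neg hm, hlog, card_filter, card_filter,
    sum_range_succ']
  simp only [hshift, Nat.testBit_zero]
  have hnewRun : (if decide ((2 * m + b) % 2 = 1) ≠ decide (m % 2 = 1) then 1 else 0)
      = (m + b) % 2 := by
    split_ifs with h <;> simp only [ne_eq, decide_eq_decide] at h <;> omega
  rw [hnewRun]
  ring

theorem s_eq_binRuns_add_one (n : ℕ) : s n = binRuns n + 1 := by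
  induction n using Nat.strong_induction_on with
  | _ n ih =>
    match n with
    | 0 => simp [s, jac, binRuns]
    | 1 => simp [s, jac, binRuns, sum_range_succ, Nat.log2_def]
    | n + 2 =>
      have hdiv : n + 2 = 2 * ((n + 2) / 2) + (n + 2) % 2 := (Nat.div_add_mod _ 2).symm
      rw [hdiv, s_two_mul_add _ _ (Nat.mod_lt _ two_pos),
        binRuns_two_mul_add _ _ (by omega) (Nat.mod_lt _ two_pos), ih _ (by omega)]
      push_cast
      ring

theorem s_eq_iff_runs_general (n m : ℕ) (hm : 2 ≤ m) :
    s n = (m : ℤ) ↔ binRuns n = m - 1 := by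
  rw [s_eq_binRuns_add_one]
  omega

theorem s_eq_iff_runs (n m : ℕ) (hn : 1 ≤ n) (hm : 2 ≤ m) :
    s n = (m : ℤ) ↔ binRuns n = m - 1 :=
  s_eq_iff_runs_general n m hm
end
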